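/- Global subsampled attention is equivariant to shifts by integer multiples of the stride: fix s, H, W, d, d_k, d_v ≥ 1, a query matrix W_q : Matrix (Fin d) (Fin d_k) ℝ, matrix-valued kernels Φ_K : G → Matrix (Fin d) (Fin d_k) ℝ and Φ_V : G → Matrix (Fin d) (Fin d_v) ℝ (G = ZMod (s·H) × ZMod (s·W)), and X : G → (Fin d → ℝ). Then for all a ∈ ZMod H and b ∈ ZMod W, A_g(shift_{(ι_s a, ι_s b)} X) = shift_{(ι_s a, ι_s b)} (A_g X). -/
import Mathlib


open Matrix
noncomputable section
/-- Circular shift of a 2D signal `X : ZMod M × ZMod N → α` by `(u,v)`: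
`(shift_{(u,v)} X)(i,j) = X (i-u, j-v)`. -/
def cshift2 {M N : ℕ} {α : Type*} (uv : ZMod M × ZMod N)
    (X : ZMod M × ZMod N → α) : ZMod M × ZMod N → α :=
  fun ij => X (ij.1 - uv.1, ij.2 - uv.2)
/-- Softmax of a score vector over a finite index type:
`softmax a i = exp (a i) / ∑ j, exp (a j)`. -/
def softmax {ι : Type*} [Fintype ι] (a : ι → ℝ) : ι → ℝ :=
  fun i => Real.exp (a i) / ∑ j, Real.exp (a j)
/-- The group homomorphism `ι_s : ZMod H → ZMod (s·H)`, `k ↦ s·k`. -/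
def iotaS (s : ℕ) {H : ℕ} (k : ZMod H) : ZMod (s * H) :=
  (s : ZMod (s * H)) * ((k.val : ℕ) : ZMod (s * H))
/-- Stride-`s` subsampled keys/values: `K_s(k,l) = ∑_{(a,b)} (Φ(a,b))ᵀ X(ι_s k + a, ι_s l + b)`. -/
def subsample (s : ℕ) {H W d m : ℕ} [NeZero (s * H)] [NeZero (s * W)]
    (Φ : ZMod (s * H) × ZMod (s * W) → Matrix (Fin d) (Fin m) ℝ)
    (X : ZMod (s * H) × ZMod (s * W) → (Fin d → ℝ)) :
    ZMod H × ZMod W → (Fin m → ℝ) :=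
  fun kl => ∑ ab : ZMod (s * H) × ZMod (s * W),
    (Φ ab).transpose.mulVec (X (iotaS s kl.1 + ab.1, iotaS s kl.2 + ab.2))

/-- Global subsampled attention (GSA): attention of each query against the stride-`s`
subsampled keys and values, with softmax over `ZMod H × ZMod W`. -/
def gsAttn (s : ℕ) {H W d dk dv : ℕ}
    [NeZero (s * H)] [NeZero (s * W)] [NeZero H] [NeZero W]
    (Wq : Matrix (Fin d) (Fin dk) ℝ)
    (ΦK : ZMod (s * H) × ZMod (s * W) → Matrix (Fin d) (Fin dk) ℝ)
    (ΦV : ZMod (s * H) × ZMod (s * W) → Matrix (Fin d) (Fin dv) ℝ)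
    (X : ZMod (s * H) × ZMod (s * W) → (Fin d → ℝ)) :
    ZMod (s * H) × ZMod (s * W) → (Fin dv → ℝ) :=
  fun ij => ∑ kl : ZMod H × ZMod W,
    softmax (fun kl' => Wq.transpose.mulVec (X ij) ⬝ᵥ subsample s ΦK X kl') kl
      • subsample s ΦV X kl


lemma iotaS_add {s H : ℕ} [NeZero H] (k m : ZMod H) :
    iotaS s (k + m) = iotaS s k + iotaS s m := by
  unfold iotaS
  rw [ZMod.val_add]
  have h : ((k.val + m.val) % H) + H * ((k.val + m.val) / H) = k.val + m.val :=
    Nat.mod_add_div _ _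
  have h2 : (((k.val + m.val) % H : ℕ) : ZMod (s * H)) + (H : ZMod (s * H)) *
      (((k.val + m.val) / H : ℕ) : ZMod (s * H)) = (k.val : ZMod (s * H)) + m.val := by
    exact_mod_cast congrArg (Nat.cast : ℕ → ZMod (s * H)) h
  have h3 := congrArg (fun z => (s : ZMod (s * H)) * z) h2
  simp only [mul_add, ← mul_assoc] at h3
  have hz : (s : ZMod (s * H)) * (H : ZMod (s * H)) = 0 := by
    have := ZMod.natCast_self (s * H)
    push_cast at this
    exact this
  rw [hz, zero_mul, add_zero] at h3
  exact h3

lemma iotaS_sub {s H : ℕ} [NeZero H] (k m : ZMod H) :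
    iotaS s (k - m) = iotaS s k - iotaS s m := by
  have := iotaS_add (s := s) (k - m) m
  rw [sub_add_cancel] at this
  rw [eq_sub_iff_add_eq, ← this]

lemma subsample_cshift (s : ℕ) {H W d m : ℕ} [NeZero (s * H)] [NeZero (s * W)]
    [NeZero H] [NeZero W]
    (Φ : ZMod (s * H) × ZMod (s * W) → Matrix (Fin d) (Fin m) ℝ)
    (X : ZMod (s * H) × ZMod (s * W) → (Fin d → ℝ)) (a : ZMod H) (b : ZMod W)
    (kl : ZMod H × ZMod W) :
    subsample s Φ (cshift2 (iotaS s a, iotaS s b) X) kl =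
      subsample s Φ X (kl.1 - a, kl.2 - b) := by
  unfold subsample cshift2
  refine Finset.sum_congr rfl fun ab _ => ?_
  congr 1
  rw [iotaS_sub, iotaS_sub]
  congr 1 <;> ring

lemma softmax_comp_equiv {ι : Type*} [Fintype ι] (f : ι → ℝ) (σ : Equiv.Perm ι) (i : ι) :
    softmax (fun j => f (σ j)) i = softmax f (σ i) := by
  unfold softmax
  rw [Equiv.sum_comp σ (fun j => Real.exp (f j))]

set_option maxHeartbeats 1000000

/-- Global subsampled attention is equivariant to shifts by integer multiples of the
stride: `A_g (shift_{(ι_s a, ι_s b)} X) = shift_{(ι_s a, ι_s b)} (A_g X)`. -/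
theorem gsAttn_stride_shift_equivariant
    (s H W d dk dv : ℕ) [NeZero s] [NeZero H] [NeZero W]
    (hs : 1 ≤ s) (hH : 1 ≤ H) (hW : 1 ≤ W) (hd : 1 ≤ d) (hdk : 1 ≤ dk) (hdv : 1 ≤ dv)
    (Wq : Matrix (Fin d) (Fin dk) ℝ)
    (ΦK : ZMod (s * H) × ZMod (s * W) → Matrix (Fin d) (Fin dk) ℝ)
    (ΦV : ZMod (s * H) × ZMod (s * W) → Matrix (Fin d) (Fin dv) ℝ)
    (X : ZMod (s * H) × ZMod (s * W) → (Fin d → ℝ))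
    (a : ZMod H) (b : ZMod W) :
    gsAttn s Wq ΦK ΦV (cshift2 (iotaS s a, iotaS s b) X) =
      cshift2 (iotaS s a, iotaS s b) (gsAttn s Wq ΦK ΦV X) := by
  funext ij
  have key : ∀ kl' : ZMod H × ZMod W,
      (Wq.transpose.mulVec (cshift2 (iotaS s a, iotaS s b) X ij) ⬝ᵥ
        subsample s ΦK (cshift2 (iotaS s a, iotaS s b) X) kl')
      = Wq.transpose.mulVec (X (ij.1 - iotaS s a, ij.2 - iotaS s b)) ⬝ᵥ
        subsample s ΦK X (kl' - (a, b)) := by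
    intro kl'
    rw [subsample_cshift]
    rfl
  show gsAttn s Wq ΦK ΦV (cshift2 (iotaS s a, iotaS s b) X) ij =
    gsAttn s Wq ΦK ΦV X (ij.1 - iotaS s a, ij.2 - iotaS s b)
  unfold gsAttn
  set σ : Equiv.Perm (ZMod H × ZMod W) := Equiv.subRight (a, b) with hσ
  have hsum : ∀ kl : ZMod H × ZMod W,
      softmax (fun kl' => Wq.transpose.mulVec (cshift2 (iotaS s a, iotaS s b) X ij) ⬝ᵥ
          subsample s ΦK (cshift2 (iotaS s a, iotaS s b) X) kl') kl
        • subsample s ΦV (cshift2 (iotaS s a, iotaS s b) X) kl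
      = (fun kl => softmax (fun kl' =>
          Wq.transpose.mulVec (X (ij.1 - iotaS s a, ij.2 - iotaS s b)) ⬝ᵥ
            subsample s ΦK X kl') kl • subsample s ΦV X kl) (σ kl) := by
    intro kl
    simp only [key]
    rw [subsample_cshift]
    have hσkl : σ kl = (kl.1 - a, kl.2 - b) := rfl
    have : (fun kl' : ZMod H × ZMod W =>
        Wq.transpose.mulVec (X (ij.1 - iotaS s a, ij.2 - iotaS s b)) ⬝ᵥ
          subsample s ΦK X (kl' - (a, b)))
      = fun kl' => Wq.transpose.mulVec (X (ij.1 - iotaS s a, ij.2 - iotaS s b)) ⬝ᵥ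
          subsample s ΦK X (σ kl') := rfl
    rw [this, ← hσkl]
    exact congrArg (fun r : ℝ => r • subsample s ΦV X (σ kl))
      (softmax_comp_equiv (fun kl' =>
        Wq.transpose.mulVec (X (ij.1 - iotaS s a, ij.2 - iotaS s b)) ⬝ᵥ
          subsample s ΦK X kl') σ kl)
  rw [Finset.sum_congr rfl (fun kl _ => hsum kl)]
  exact Equiv.sum_comp σ (fun kl => softmax (fun kl' =>
      Wq.transpose.mulVec (X (ij.1 - iotaS s a, ij.2 - iotaS s b)) ⬝ᵥ
        subsample s ΦK X kl') kl • subsample s ΦV X kl)
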